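/- arXiv:2303.14366 — 6 statements merged into one kernel-verified Lean document; each statement's English description precedes it below -/
import Mathlib

section
/- Let α₁, α₂, β > 0 with α₁ + α₂ = 1, and let x₀ > 0. Consider in ℝ² the circle C₁ centered at ((1 + 2α₂/β)x₀, 0) with radius 2x₀√((α₂/β)(1 + α₂/β)), and the circle C₂ centered at (−(1 + 2α₁/β)x₀, 0) with radius 2x₀√((α₁/β)(1 + α₁/β)). Then the sum of the two radii is at most the distance between the centers; in particular the open disks bounded by C₁ and C₂ are disjoint. -/
/-! The radii are bounded by AM–GM: `2√(a(1 + a)) ≤ a + (1 + a) = 1 + 2a`. With `a = α₂/β` and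
`b = α₁/β` this gives `r₁ + r₂ ≤ x₀(1 + 2a) + x₀(1 + 2b)`, which is exactly the distance between
the two centres on the horizontal axis. -/

lemma Real.two_mul_sqrt_mul_one_add_le {a : ℝ} (ha : 0 ≤ 1 + 2 * a) :
    2 * √(a * (1 + a)) ≤ 1 + 2 * a := by
  have : √(a * (1 + a)) ≤ (1 + 2 * a) / 2 :=
    (Real.sqrt_le_left (by linarith)).2 (by nlinarith)
  linarith

lemma EuclideanSpace.dist_eq_abs_sub_of_ofLp_eq {p q : EuclideanSpace ℝ (Fin 2)} {x y : ℝ}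
    (hp : p.ofLp = ![x, 0]) (hq : q.ofLp = ![y, 0]) : dist p q = |x - y| := by
  simp [EuclideanSpace.dist_eq, Fin.sum_univ_two, Real.dist_eq, hp, hq, Real.sqrt_sq_eq_abs]

theorem stmt1_general (α₁ α₂ β x₀ : ℝ) (hα₁ : 0 < α₁) (hα₂ : 0 < α₂) (hβ : 0 < β)
    (hx₀ : 0 < x₀)
    (c₁ c₂ : EuclideanSpace ℝ (Fin 2))
    (hc₁ : c₁ = ![(1 + 2 * α₂ / β) * x₀, 0])
    (hc₂ : c₂ = ![-((1 + 2 * α₁ / β) * x₀), 0])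
    (r₁ r₂ : ℝ)
    (hr₁ : r₁ = 2 * x₀ * Real.sqrt ((α₂ / β) * (1 + α₂ / β)))
    (hr₂ : r₂ = 2 * x₀ * Real.sqrt ((α₁ / β) * (1 + α₁ / β))) :
    r₁ + r₂ ≤ dist c₁ c₂ ∧ Disjoint (Metric.ball c₁ r₁) (Metric.ball c₂ r₂) := by
  have hr₁_le : r₁ ≤ x₀ * (1 + 2 * (α₂ / β)) := by
    rw [hr₁, mul_comm 2 x₀, mul_assoc]
    exact mul_le_mul_of_nonneg_left (Real.two_mul_sqrt_mul_one_add_le (by positivity)) hx₀.le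
  have hr₂_le : r₂ ≤ x₀ * (1 + 2 * (α₁ / β)) := by
    rw [hr₂, mul_comm 2 x₀, mul_assoc]
    exact mul_le_mul_of_nonneg_left (Real.two_mul_sqrt_mul_one_add_le (by positivity)) hx₀.le
  have hdist : dist c₁ c₂ = x₀ * (1 + 2 * (α₂ / β)) + x₀ * (1 + 2 * (α₁ / β)) := by
    rw [EuclideanSpace.dist_eq_abs_sub_of_ofLp_eq hc₁ hc₂, sub_neg_eq_add,
      abs_of_pos (by positivity)]
    ring
  have hsum_le : r₁ + r₂ ≤ dist c₁ c₂ := by linarith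
  exact ⟨hsum_le, Metric.ball_disjoint_ball hsum_le⟩

theorem stmt1 (α₁ α₂ β x₀ : ℝ) (hα₁ : 0 < α₁) (hα₂ : 0 < α₂) (hβ : 0 < β)
    (hsum : α₁ + α₂ = 1) (hx₀ : 0 < x₀)
    (c₁ c₂ : EuclideanSpace ℝ (Fin 2))
    (hc₁ : c₁ = ![(1 + 2 * α₂ / β) * x₀, 0])
    (hc₂ : c₂ = ![-((1 + 2 * α₁ / β) * x₀), 0])
    (r₁ r₂ : ℝ)
    (hr₁ : r₁ = 2 * x₀ * Real.sqrt ((α₂ / β) * (1 + α₂ / β)))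
    (hr₂ : r₂ = 2 * x₀ * Real.sqrt ((α₁ / β) * (1 + α₁ / β))) :
    r₁ + r₂ ≤ dist c₁ c₂ ∧ Disjoint (Metric.ball c₁ r₁) (Metric.ball c₂ r₂) :=
  stmt1_general α₁ α₂ β x₀ hα₁ hα₂ hβ hx₀ c₁ c₂ hc₁ hc₂ r₁ r₂ hr₁ hr₂
end

section
/- Uniqueness of the optimal facet: Let c ≥ 1, a₁,…,a_c > 0, and let v ∈ ℝ^c be a fixed vector. Let p_i ∈ ℝ^c have j-th coordinate a_i δ_{ij}, A² = (Σ_i 1/a_i²)^{-1}, n = Σ_i (A²/a_i²)p_i, q_i = n − p_i. Suppose H₁, H₂ ⊆ {1,…,c} are subsets such that v = Σ_{i∈H_k} s_i^{(k)} p_i + Σ_{i∈H_k^c} t_i^{(k)} q_i with s_i^{(k)} > 0, Σ_{i∈H_k} s_i^{(k)} = 1, and t_i^{(k)} ≥ 0, for k = 1, 2. Then H₁ = H₂. -/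
-- If H₁\H₂ is nonempty, comparing the key identity at a point of H₁\H₂ gives T₁ < T₂.
lemma auxT {c : ℕ} (a nn : Fin c → ℝ) (ha : ∀ i, 0 < a i) (hnn : ∀ i, 0 < nn i)
    (H₁ H₂ : Finset (Fin c)) (s₁ t₁ s₂ t₂ : Fin c → ℝ) (T₁ T₂ : ℝ)
    (key : ∀ j, (if j ∈ H₁ then s₁ j else -t₁ j) * a j + T₁ * nn j
              = (if j ∈ H₂ then s₂ j else -t₂ j) * a j + T₂ * nn j)
    (hs₁pos : ∀ i ∈ H₁, 0 < s₁ i) (ht₂ : ∀ i ∈ H₂ᶜ, 0 ≤ t₂ i)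
    (hne : (H₁ \ H₂).Nonempty) : T₁ < T₂ := by
  obtain ⟨j, hj⟩ := hne
  rw [Finset.mem_sdiff] at hj
  have h := key j
  rw [if_pos hj.1, if_neg hj.2] at h
  have h1 : 0 < s₁ j := hs₁pos j hj.1
  have h2 : 0 ≤ t₂ j := ht₂ j (Finset.mem_compl.mpr hj.2)
  have haj := ha j
  have hnj := hnn j
  nlinarith [mul_pos h1 haj, mul_nonneg h2 haj.le]

-- Strict inclusion H₂ ⊊ H₁ plus T₁ < T₂ is impossible.
lemma auxSub {c : ℕ} (a nn : Fin c → ℝ) (ha : ∀ i, 0 < a i) (hnn : ∀ i, 0 < nn i)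
    (H₁ H₂ : Finset (Fin c)) (s₁ t₁ s₂ t₂ : Fin c → ℝ) (T₁ T₂ : ℝ)
    (key : ∀ j, (if j ∈ H₁ then s₁ j else -t₁ j) * a j + T₁ * nn j
              = (if j ∈ H₂ then s₂ j else -t₂ j) * a j + T₂ * nn j)
    (hs₁pos : ∀ i ∈ H₁, 0 < s₁ i) (hs₁sum : ∑ i ∈ H₁, s₁ i = 1)
    (hs₂sum : ∑ i ∈ H₂, s₂ i = 1)
    (hsub : H₂ ⊆ H₁) (hne : (H₁ \ H₂).Nonempty) (hT : T₁ < T₂) : False := by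
  -- on H₂ ⊆ H₁ we have s₁ j > s₂ j
  have hgt : ∀ j ∈ H₂, s₂ j < s₁ j := by
    intro j hj
    have h := key j
    rw [if_pos (hsub hj), if_pos hj] at h
    have haj := ha j
    have hnj := hnn j
    nlinarith
  have h1 : ∑ i ∈ H₂, s₂ i < ∑ i ∈ H₂, s₁ i := by
    obtain ⟨j, hj⟩ := hne
    rw [Finset.mem_sdiff] at hj
    rcases Finset.eq_empty_or_nonempty H₂ with h | h
    · -- H₂ empty contradicts hs₂sum = 1
      simp [h] at hs₂sum
    · exact Finset.sum_lt_sum_of_nonempty h hgt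
  have h2 : ∑ i ∈ H₂, s₁ i < ∑ i ∈ H₁, s₁ i := by
    obtain ⟨j, hj⟩ := hne
    rw [Finset.mem_sdiff] at hj
    refine Finset.sum_lt_sum_of_subset hsub hj.1 hj.2 (hs₁pos j hj.1) ?_
    intro k hk _
    exact (hs₁pos k hk).le
  linarith [hs₂sum, hs₁sum]

theorem stmt11 (c : ℕ) (hc : 1 ≤ c) (a : Fin c → ℝ) (ha : ∀ i, 0 < a i)
    (v : Fin c → ℝ)
    (A2 : ℝ) (hA2 : A2 = (∑ i, 1 / (a i) ^ 2)⁻¹)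
    (p q : Fin c → Fin c → ℝ) (n : Fin c → ℝ)
    (hp : ∀ i j, p i j = if i = j then a i else 0)
    (hn : ∀ i, n i = ∑ j, (A2 / (a j) ^ 2) * p j i)
    (hq : ∀ i j, q i j = n j - p i j)
    (H₁ H₂ : Finset (Fin c)) (s₁ t₁ s₂ t₂ : Fin c → ℝ)
    (hs₁pos : ∀ i ∈ H₁, 0 < s₁ i) (hs₁sum : ∑ i ∈ H₁, s₁ i = 1)
    (ht₁ : ∀ i ∈ H₁ᶜ, 0 ≤ t₁ i)
    (hv₁ : ∀ j, v j = ∑ i ∈ H₁, s₁ i * p i j + ∑ i ∈ H₁ᶜ, t₁ i * q i j)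
    (hs₂pos : ∀ i ∈ H₂, 0 < s₂ i) (hs₂sum : ∑ i ∈ H₂, s₂ i = 1)
    (ht₂ : ∀ i ∈ H₂ᶜ, 0 ≤ t₂ i)
    (hv₂ : ∀ j, v j = ∑ i ∈ H₂, s₂ i * p i j + ∑ i ∈ H₂ᶜ, t₂ i * q i j) :
    H₁ = H₂ := by
  have hcne : Nonempty (Fin c) := ⟨⟨0, hc⟩⟩
  have hA2pos : 0 < A2 := by
    rw [hA2]
    apply inv_pos.mpr
    apply Finset.sum_pos
    · intro i _
      have := ha i
      positivity
    · exact Finset.univ_nonempty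
  -- n j = A2 / a j
  have hnval : ∀ j, n j = A2 / a j := by
    intro j
    rw [hn]
    have : ∀ i, (A2 / (a i) ^ 2) * p i j = if i = j then A2 / a j else 0 := by
      intro i
      rw [hp]
      split_ifs with h
      · subst h
        have := (ha i).ne'
        field_simp
      · ring
    simp_rw [this]
    simp
  have hnpos : ∀ j, 0 < n j := by
    intro j
    rw [hnval]
    exact div_pos hA2pos (ha j)
  -- rewrite each representation
  have repr : ∀ (H : Finset (Fin c)) (s t : Fin c → ℝ),
      (∀ j, v j = ∑ i ∈ H, s i * p i j + ∑ i ∈ Hᶜ, t i * q i j) →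
      ∀ j, v j = (if j ∈ H then s j else -t j) * a j + (∑ i ∈ Hᶜ, t i) * n j := by
    intro H s t hv j
    rw [hv j]
    have e1 : ∑ i ∈ H, s i * p i j = if j ∈ H then s j * a j else 0 := by
      simp_rw [hp]
      rw [Finset.sum_ite_eq' H j (fun i => s i * a i) |>.symm]
      apply Finset.sum_congr rfl
      intro i _
      split_ifs with h
      · subst h; ring
      · ring
    have e2 : ∑ i ∈ Hᶜ, t i * q i j
        = (∑ i ∈ Hᶜ, t i) * n j - (if j ∈ Hᶜ then t j * a j else 0) := by
      simp_rw [hq, hp, mul_sub]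
      rw [Finset.sum_sub_distrib, ← Finset.sum_mul]
      congr 1
      rw [Finset.sum_ite_eq' Hᶜ j (fun i => t i * a i) |>.symm]
      apply Finset.sum_congr rfl
      intro i _
      split_ifs with h
      · subst h; ring
      · ring
    rw [e1, e2]
    by_cases h : j ∈ H
    · rw [if_pos h, if_pos h, if_neg (by simp [h])]
      ring
    · rw [if_neg h, if_neg h, if_pos (by simp [h])]
      ring
  have r1 := repr H₁ s₁ t₁ hv₁
  have r2 := repr H₂ s₂ t₂ hv₂
  have key : ∀ j, (if j ∈ H₁ then s₁ j else -t₁ j) * a j + (∑ i ∈ H₁ᶜ, t₁ i) * n j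
              = (if j ∈ H₂ then s₂ j else -t₂ j) * a j + (∑ i ∈ H₂ᶜ, t₂ i) * n j := by
    intro j
    rw [← r1 j, ← r2 j]
  have key' : ∀ j, (if j ∈ H₂ then s₂ j else -t₂ j) * a j + (∑ i ∈ H₂ᶜ, t₂ i) * n j
              = (if j ∈ H₁ then s₁ j else -t₁ j) * a j + (∑ i ∈ H₁ᶜ, t₁ i) * n j :=
    fun j => (key j).symm
  by_contra hne
  rcases Finset.eq_empty_or_nonempty (H₁ \ H₂) with h12 | h12
  · rcases Finset.eq_empty_or_nonempty (H₂ \ H₁) with h21 | h21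
    · exact hne (Finset.Subset.antisymm
        (Finset.sdiff_eq_empty_iff_subset.mp h12)
        (Finset.sdiff_eq_empty_iff_subset.mp h21))
    · -- H₁ ⊆ H₂ strictly
      have hsub : H₁ ⊆ H₂ := Finset.sdiff_eq_empty_iff_subset.mp h12
      have hT := auxT a n ha hnpos H₂ H₁ s₂ t₂ s₁ t₁ _ _ key' hs₂pos ht₁ h21
      exact auxSub a n ha hnpos H₂ H₁ s₂ t₂ s₁ t₁ _ _ key' hs₂pos hs₂sum hs₁sum hsub h21 hT
  · rcases Finset.eq_empty_or_nonempty (H₂ \ H₁) with h21 | h21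
    · have hsub : H₂ ⊆ H₁ := Finset.sdiff_eq_empty_iff_subset.mp h21
      have hT := auxT a n ha hnpos H₁ H₂ s₁ t₁ s₂ t₂ _ _ key hs₁pos ht₂ h12
      exact auxSub a n ha hnpos H₁ H₂ s₁ t₁ s₂ t₂ _ _ key hs₁pos hs₁sum hs₂sum hsub h12 hT
    · have hT1 := auxT a n ha hnpos H₁ H₂ s₁ t₁ s₂ t₂ _ _ key hs₁pos ht₂ h12
      have hT2 := auxT a n ha hnpos H₂ H₁ s₂ t₂ s₁ t₁ _ _ key' hs₂pos ht₁ h21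
      linarith
end

section
/- Let d₁,…,d_c > 0, α₁,…,α_c > 0 with Σα_i = 1, and β > 0. For nonempty H ⊆ {1,…,c} define d_H² = (β + Σ_{j∈H} α_j)/(Σ_{j∈H} α_j/d_j²). If H satisfies d_i² < d_H² for all i ∈ H and d_i² ≥ d_H² for all i ∉ H, then the values u_i = (α_i/β)(d_H²/d_i² − 1) for i ∈ H and u_i = 0 for i ∉ H satisfy u_i ≥ 0 for all i and Σ_{i=1}^c u_i = 1. -/
theorem Finset.sum_mul_div_sub_one_of_eq_div {ι K : Type*} [Field K] (s : Finset ι)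
    (a x : ι → K) (β D : K) (hS : ∑ i ∈ s, a i / x i ≠ 0)
    (hD : D = (β + ∑ i ∈ s, a i) / ∑ i ∈ s, a i / x i) :
    ∑ i ∈ s, a i * (D / x i - 1) = β := by
  have hDS : D * ∑ i ∈ s, a i / x i = β + ∑ i ∈ s, a i := by
    rw [hD, div_mul_cancel₀ _ hS]
  calc ∑ i ∈ s, a i * (D / x i - 1)
      = D * ∑ i ∈ s, a i / x i - ∑ i ∈ s, a i := by
        rw [Finset.mul_sum, ← Finset.sum_sub_distrib]
        exact Finset.sum_congr rfl fun i _ => by ring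
    _ = β := by rw [hDS]; ring

theorem stmt12_general (c : ℕ) (d α : Fin c → ℝ) (β : ℝ)
    (hd : ∀ i, 0 < d i) (hα : ∀ i, 0 < α i) (hβ : 0 < β)
    (H : Finset (Fin c)) (hH : H.Nonempty)
    (dH2 : ℝ) (hdH2 : dH2 = (β + ∑ j ∈ H, α j) / (∑ j ∈ H, α j / (d j) ^ 2))
    (hin : ∀ i ∈ H, (d i) ^ 2 < dH2)
    (u : Fin c → ℝ)
    (hu : ∀ i, u i = if i ∈ H then (α i / β) * (dH2 / (d i) ^ 2 - 1) else 0) :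
    (∀ i, 0 ≤ u i) ∧ ∑ i, u i = 1 := by
  have hd2 : ∀ i, 0 < d i ^ 2 := fun i => pow_pos (hd i) 2
  have hS : 0 < ∑ j ∈ H, α j / d j ^ 2 :=
    Finset.sum_pos (fun j _ => div_pos (hα j) (hd2 j)) hH
  refine ⟨fun i => ?_, ?_⟩
  · rw [hu i]
    split_ifs with hi
    · exact mul_nonneg (div_pos (hα i) hβ).le
        (sub_nonneg.2 ((one_le_div (hd2 i)).2 (hin i hi).le))
    · exact le_rfl
  · simp_rw [hu, Finset.sum_ite_mem, Finset.univ_inter, div_mul_eq_mul_div]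
    rw [← Finset.sum_div, Finset.sum_mul_div_sub_one_of_eq_div H α _ β dH2 hS.ne' hdH2,
      div_self hβ.ne']

theorem stmt12 (c : ℕ) (d α : Fin c → ℝ) (β : ℝ)
    (hd : ∀ i, 0 < d i) (hα : ∀ i, 0 < α i) (hαsum : ∑ i, α i = 1) (hβ : 0 < β)
    (H : Finset (Fin c)) (hH : H.Nonempty)
    (dH2 : ℝ) (hdH2 : dH2 = (β + ∑ j ∈ H, α j) / (∑ j ∈ H, α j / (d j) ^ 2))
    (hin : ∀ i ∈ H, (d i) ^ 2 < dH2) (hout : ∀ i ∉ H, (d i) ^ 2 ≥ dH2)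
    (u : Fin c → ℝ)
    (hu : ∀ i, u i = if i ∈ H then (α i / β) * (dH2 / (d i) ^ 2 - 1) else 0) :
    (∀ i, 0 ≤ u i) ∧ ∑ i, u i = 1 :=
  stmt12_general c d α β hd hα hβ H hH dH2 hdH2 hin u hu
end

section
/- Uniqueness: Let d₁,…,d_c > 0, α₁,…,α_c > 0 with Σα_i = 1, and β > 0. If H₁ and H₂ are nonempty subsets of {1,…,c} each satisfying 'd_i² < d_H² for all i ∈ H and d_i² ≥ d_H² for all i ∉ H' (with d_H² = (β + Σ_{j∈H} α_j)/(Σ_{j∈H} α_j/d_j²)), then H₁ = H₂. -/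
lemma aux14 (c : ℕ) (d α : Fin c → ℝ) (β : ℝ)
    (hd : ∀ i, 0 < d i) (hα : ∀ i, 0 < α i) (hβ : 0 < β)
    (H₁ H₂ : Finset (Fin c)) (hne : H₁.Nonempty)
    (hsub : H₁ ⊆ H₂) (hneq : H₁ ≠ H₂)
    (hin : ∀ i ∈ H₂, (d i) ^ 2 < (β + ∑ j ∈ H₂, α j) / (∑ j ∈ H₂, α j / (d j) ^ 2)) :
    (β + ∑ j ∈ H₂, α j) / (∑ j ∈ H₂, α j / (d j) ^ 2) <
    (β + ∑ j ∈ H₁, α j) / (∑ j ∈ H₁, α j / (d j) ^ 2) := by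
  have hB₁ : 0 < ∑ j ∈ H₁, α j / (d j) ^ 2 :=
    Finset.sum_pos (fun i _ => div_pos (hα i) (pow_pos (hd i) 2)) hne
  have hB₂ : 0 < ∑ j ∈ H₂, α j / (d j) ^ 2 :=
    Finset.sum_pos (fun i _ => div_pos (hα i) (pow_pos (hd i) 2)) (hne.mono hsub)
  have hA₁ : 0 < ∑ j ∈ H₁, α j := Finset.sum_pos (fun i _ => hα i) hne
  have hA₂ : 0 < ∑ j ∈ H₂, α j := Finset.sum_pos (fun i _ => hα i) (hne.mono hsub)
  set T₂ := (β + ∑ j ∈ H₂, α j) / (∑ j ∈ H₂, α j / (d j) ^ 2) with hT₂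
  have hT₂pos : 0 < T₂ := div_pos (by linarith) hB₂
  have hE : (H₂ \ H₁).Nonempty := by
    rw [Finset.sdiff_nonempty]
    intro h
    exact hneq (Finset.Subset.antisymm hsub h)
  -- sum splits
  have hsplitA : (∑ j ∈ H₂ \ H₁, α j) + ∑ j ∈ H₁, α j = ∑ j ∈ H₂, α j :=
    Finset.sum_sdiff hsub
  have hsplitB : (∑ j ∈ H₂ \ H₁, α j / (d j) ^ 2) + ∑ j ∈ H₁, α j / (d j) ^ 2
      = ∑ j ∈ H₂, α j / (d j) ^ 2 := Finset.sum_sdiff hsub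
  -- each term in E contributes more than α i / T₂
  have hterm : ∀ i ∈ H₂ \ H₁, α i / T₂ < α i / (d i) ^ 2 := by
    intro i hi
    have hi2 := Finset.mem_sdiff.mp hi
    exact div_lt_div_of_pos_left (hα i) (pow_pos (hd i) 2) (hin i hi2.1)
  have hsum : (∑ i ∈ H₂ \ H₁, α i) / T₂ < ∑ i ∈ H₂ \ H₁, α i / (d i) ^ 2 := by
    rw [Finset.sum_div]
    exact Finset.sum_lt_sum_of_nonempty hE hterm
  have ha : (∑ i ∈ H₂ \ H₁, α i) < T₂ * (∑ i ∈ H₂ \ H₁, α i / (d i) ^ 2) := by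
    rw [div_lt_iff₀ hT₂pos] at hsum
    linarith [hsum]
  have hTB₂ : T₂ * (∑ j ∈ H₂, α j / (d j) ^ 2) = β + ∑ j ∈ H₂, α j := by
    rw [hT₂]; field_simp
  rw [lt_div_iff₀ hB₁]
  nlinarith [ha, hTB₂, hsplitA, hsplitB]

theorem stmt14 (c : ℕ) (d α : Fin c → ℝ) (β : ℝ)
    (hd : ∀ i, 0 < d i) (hα : ∀ i, 0 < α i) (hαsum : ∑ i, α i = 1) (hβ : 0 < β)
    (H₁ H₂ : Finset (Fin c)) (hH₁ : H₁.Nonempty) (hH₂ : H₂.Nonempty)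
    (h₁in : ∀ i ∈ H₁, (d i) ^ 2 < (β + ∑ j ∈ H₁, α j) / (∑ j ∈ H₁, α j / (d j) ^ 2))
    (h₁out : ∀ i ∉ H₁, (d i) ^ 2 ≥ (β + ∑ j ∈ H₁, α j) / (∑ j ∈ H₁, α j / (d j) ^ 2))
    (h₂in : ∀ i ∈ H₂, (d i) ^ 2 < (β + ∑ j ∈ H₂, α j) / (∑ j ∈ H₂, α j / (d j) ^ 2))
    (h₂out : ∀ i ∉ H₂, (d i) ^ 2 ≥ (β + ∑ j ∈ H₂, α j) / (∑ j ∈ H₂, α j / (d j) ^ 2)) :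
    H₁ = H₂ := by
  by_contra hneq
  by_cases hs : H₁ ⊆ H₂
  · -- H₁ ⊊ H₂ : T₂ < T₁ by aux, but some i ∈ H₂ \ H₁ has T₁ ≤ d i² < T₂
    have hlt := aux14 c d α β hd hα hβ H₁ H₂ hH₁ hs hneq h₂in
    obtain ⟨i, hi⟩ : (H₂ \ H₁).Nonempty := by
      rw [Finset.sdiff_nonempty]; intro h; exact hneq (Finset.Subset.antisymm hs h)
    have hi2 := Finset.mem_sdiff.mp hi
    have h1 := h₁out i hi2.2
    have h2 := h₂in i hi2.1
    linarith
  · by_cases ht : H₂ ⊆ H₁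
    · have hlt := aux14 c d α β hd hα hβ H₂ H₁ hH₂ ht (Ne.symm hneq) h₁in
      obtain ⟨i, hi⟩ : (H₁ \ H₂).Nonempty := by
        rw [Finset.sdiff_nonempty]; intro h; exact hneq (Finset.Subset.antisymm h ht)
      have hi2 := Finset.mem_sdiff.mp hi
      have h1 := h₂out i hi2.2
      have h2 := h₁in i hi2.1
      linarith
    · -- neither contains the other
      obtain ⟨i, hi₁, hi₂⟩ := Finset.not_subset.mp hs
      obtain ⟨j, hj₂, hj₁⟩ := Finset.not_subset.mp ht
      have a1 := h₁in i hi₁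
      have a2 := h₂out i hi₂
      have b1 := h₂in j hj₂
      have b2 := h₁out j hj₁
      linarith
end

section
/- Monotonicity of the threshold: Let d₁,…,d_c > 0, α₁,…,α_c > 0, β > 0, and d_H² = (β + Σ_{j∈H} α_j)/(Σ_{j∈H} α_j/d_j²) for nonempty H. If i ∈ H and d_i² ≥ d_H², then d_{H∖{i}}² ≤ d_H² (removing an index whose distance exceeds the threshold does not increase the threshold), provided H∖{i} is nonempty. -/
/-!
The threshold `d_H²` is the mediant of `d_{H∖{i}}²` and `α_i / (α_i / d_i²) = d_i²`, so it lies
between them; as `d_i²` is on the upper side of it, `d_{H∖{i}}²` is on the lower side.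
-/

open Finset

theorem div_le_mediant_of_mediant_le_div {K : Type*} [Field K] [LinearOrder K]
    [IsStrictOrderedRing K] {a b c d : K} (hb : 0 < b) (hd : 0 < d)
    (h : (a + c) / (b + d) ≤ c / d) : a / b ≤ (a + c) / (b + d) := by
  have hbd : 0 < b + d := add_pos hb hd
  rw [div_le_div_iff₀ hbd hd] at h
  rw [div_le_div_iff₀ hb hbd]
  linarith

theorem stmt15_general (c : ℕ) (d α : Fin c → ℝ) (β : ℝ)
    (hd : ∀ i, 0 < d i) (hα : ∀ i, 0 < α i)
    (H : Finset (Fin c)) (i : Fin c) (hi : i ∈ H) (hne : (H.erase i).Nonempty)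
    (hdi : (d i) ^ 2 ≥ (β + ∑ j ∈ H, α j) / (∑ j ∈ H, α j / (d j) ^ 2)) :
    (β + ∑ j ∈ H.erase i, α j) / (∑ j ∈ H.erase i, α j / (d j) ^ 2) ≤
      (β + ∑ j ∈ H, α j) / (∑ j ∈ H, α j / (d j) ^ 2) := by
  have hw : ∀ j, 0 < α j / d j ^ 2 := fun j => div_pos (hα j) (pow_pos (hd j) 2)
  have hnum : β + ∑ j ∈ H, α j = (β + ∑ j ∈ H.erase i, α j) + α i := by
    rw [← add_sum_erase H α hi]; ring
  have hden : ∑ j ∈ H, α j / d j ^ 2 = ∑ j ∈ H.erase i, α j / d j ^ 2 + α i / d i ^ 2 := by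
    rw [← add_sum_erase H _ hi, add_comm]
  have hdi' : α i / (α i / d i ^ 2) = d i ^ 2 := by
    field_simp [(hα i).ne', (hd i).ne']
  rw [hnum, hden] at hdi ⊢
  exact div_le_mediant_of_mediant_le_div (sum_pos (fun j _ => hw j) hne) (hw i)
    (hdi.trans hdi'.ge)

theorem stmt15 (c : ℕ) (d α : Fin c → ℝ) (β : ℝ)
    (hd : ∀ i, 0 < d i) (hα : ∀ i, 0 < α i) (hβ : 0 < β)
    (H : Finset (Fin c)) (i : Fin c) (hi : i ∈ H) (hne : (H.erase i).Nonempty)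
    (hdi : (d i) ^ 2 ≥ (β + ∑ j ∈ H, α j) / (∑ j ∈ H, α j / (d j) ^ 2)) :
    (β + ∑ j ∈ H.erase i, α j) / (∑ j ∈ H.erase i, α j / (d j) ^ 2) ≤
      (β + ∑ j ∈ H, α j) / (∑ j ∈ H, α j / (d j) ^ 2) :=
  stmt15_general c d α β hd hα H i hi hne hdi
end

section
/- Let H ⊆ {1,…,c} be the set from Proposition 1 (d_i² < d_H² for i ∈ H, d_i² ≥ d_H² for i ∉ H, where d_H² = (β + Σ_{j∈H}α_j)/(Σ_{j∈H}α_j/d_j²)). Then the memberships u_i = (α_i/β)(d_H²/d_i² − 1) for i ∈ H, u_i = 0 otherwise, minimize J(u) = Σ_{i=1}^c (u_i²/(2α_i) + u_i/β) d_i² over all u ∈ ℝ^c with u_i ≥ 0 and Σ_i u_i = 1. -/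
/-!
The objective is a separable convex quadratic, so it lies above its tangent plane at `u`:
`J w - J u ≥ ∑ i, (w i - u i) * g i` with `g = ∇J u`. On `H` the gradient takes the common value
`d_H² / β`, and off `H` (where `u` vanishes) it is `d_i² / β ≥ d_H² / β`. These are the KKT
conditions with multiplier `d_H² / β`, and since `w` and `u` both have total mass one the tangent
term is nonnegative.
-/

open Finset

lemma sum_sub_mul_nonneg_of_complementary_slackness {ι : Type*} [Fintype ι] {u w g : ι → ℝ}
    {μ : ℝ} (hw : ∀ i, 0 ≤ w i) (hsum : ∑ i, w i = ∑ i, u i) (hμ : ∀ i, μ ≤ g i)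
    (hslack : ∀ i, u i * (g i - μ) = 0) :
    0 ≤ ∑ i, (w i - u i) * g i := by
  have hsplit : ∀ i, (w i - u i) * g i = w i * (g i - μ) + (μ * w i - μ * u i) - u i * (g i - μ) :=
    fun i => by ring
  simp only [hsplit, sum_sub_distrib, sum_add_distrib, ← mul_sum, hsum, hslack, sub_self,
    add_zero, sub_zero]
  exact sum_nonneg fun i _ => mul_nonneg (hw i) (sub_nonneg.2 (hμ i))

lemma quadratic_term_add_sub_mul_deriv_le {α : ℝ} (hα : 0 < α) (β d x y : ℝ) :
    (y ^ 2 / (2 * α) + y / β) * d ^ 2 + (x - y) * (y * d ^ 2 / α + d ^ 2 / β) ≤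
      (x ^ 2 / (2 * α) + x / β) * d ^ 2 := by
  have hgap : (x ^ 2 / (2 * α) + x / β) * d ^ 2 -
      ((y ^ 2 / (2 * α) + y / β) * d ^ 2 + (x - y) * (y * d ^ 2 / α + d ^ 2 / β)) =
      (x - y) ^ 2 * d ^ 2 / (2 * α) := by
    field_simp
    ring
  have : 0 ≤ (x - y) ^ 2 * d ^ 2 / (2 * α) := by positivity
  linarith

lemma sum_div_mul_div_sq_sub_one {ι : Type*} (H : Finset ι) (α d : ι → ℝ) {β D : ℝ}
    (hβ : β ≠ 0) (hD : D * ∑ j ∈ H, α j / d j ^ 2 = β + ∑ j ∈ H, α j) :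
    ∑ i ∈ H, α i / β * (D / d i ^ 2 - 1) = 1 := by
  have hterm : ∀ i ∈ H, α i / β * (D / d i ^ 2 - 1) = (D * (α i / d i ^ 2) - α i) / β :=
    fun i _ => by ring
  rw [sum_congr rfl hterm, ← sum_div, sum_sub_distrib, ← mul_sum, hD, add_sub_cancel_right,
    div_self hβ]

lemma div_mul_div_sq_sub_one_mul_sq_div_add {α β d D : ℝ} (hα : α ≠ 0) (hd : d ≠ 0) :
    α / β * (D / d ^ 2 - 1) * d ^ 2 / α + d ^ 2 / β = D / β := by
  field_simp
  ring

theorem stmt19_general (c : ℕ) (d α : Fin c → ℝ) (β : ℝ)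
    (hd : ∀ i, 0 < d i) (hα : ∀ i, 0 < α i) (hβ : 0 < β)
    (H : Finset (Fin c)) (hH : H.Nonempty)
    (dH2 : ℝ) (hdH2 : dH2 = (β + ∑ j ∈ H, α j) / (∑ j ∈ H, α j / (d j) ^ 2))
    (hout : ∀ i ∉ H, (d i) ^ 2 ≥ dH2)
    (u : Fin c → ℝ)
    (hu : ∀ i, u i = if i ∈ H then (α i / β) * (dH2 / (d i) ^ 2 - 1) else 0) :
    ∀ w : Fin c → ℝ, (∀ i, 0 ≤ w i) → (∑ i, w i = 1) →
      ∑ i, ((u i) ^ 2 / (2 * α i) + u i / β) * (d i) ^ 2 ≤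
        ∑ i, ((w i) ^ 2 / (2 * α i) + w i / β) * (d i) ^ 2 := by
  intro w hw hwsum
  set g : Fin c → ℝ := fun i => u i * d i ^ 2 / α i + d i ^ 2 / β
  have hS : 0 < ∑ j ∈ H, α j / d j ^ 2 :=
    sum_pos (fun j _ => div_pos (hα j) (pow_pos (hd j) 2)) hH
  have husum : ∑ i, u i = 1 := by
    simp only [hu, sum_ite_mem, univ_inter]
    exact sum_div_mul_div_sq_sub_one H α d hβ.ne' (by rw [hdH2, div_mul_cancel₀ _ hS.ne'])
  have hgrad : ∀ i, g i = if i ∈ H then dH2 / β else d i ^ 2 / β := by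
    intro i
    by_cases hi : i ∈ H
    · simp only [g, hu, if_pos hi]
      exact div_mul_div_sq_sub_one_mul_sq_div_add (hα i).ne' (hd i).ne'
    · simp [g, hu, hi]
  have hkkt : 0 ≤ ∑ i, (w i - u i) * g i := by
    refine sum_sub_mul_nonneg_of_complementary_slackness hw (hwsum.trans husum.symm)
      (μ := dH2 / β) (fun i => ?_) (fun i => ?_) <;> rw [hgrad i] <;> split_ifs with hi
    · rfl
    · exact div_le_div_of_nonneg_right (hout i hi) hβ.le
    · rw [sub_self, mul_zero]
    · rw [hu i, if_neg hi, zero_mul]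
  calc ∑ i, ((u i) ^ 2 / (2 * α i) + u i / β) * (d i) ^ 2
      ≤ ∑ i, ((u i) ^ 2 / (2 * α i) + u i / β) * (d i) ^ 2 + ∑ i, (w i - u i) * g i :=
        le_add_of_nonneg_right hkkt
    _ ≤ ∑ i, ((w i) ^ 2 / (2 * α i) + w i / β) * (d i) ^ 2 := by
        rw [← sum_add_distrib]
        exact sum_le_sum fun i _ => quadratic_term_add_sub_mul_deriv_le (hα i) β (d i) (w i) (u i)

theorem stmt19 (c : ℕ) (d α : Fin c → ℝ) (β : ℝ)
    (hd : ∀ i, 0 < d i) (hα : ∀ i, 0 < α i) (hαsum : ∑ i, α i = 1) (hβ : 0 < β)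
    (H : Finset (Fin c)) (hH : H.Nonempty)
    (dH2 : ℝ) (hdH2 : dH2 = (β + ∑ j ∈ H, α j) / (∑ j ∈ H, α j / (d j) ^ 2))
    (hin : ∀ i ∈ H, (d i) ^ 2 < dH2) (hout : ∀ i ∉ H, (d i) ^ 2 ≥ dH2)
    (u : Fin c → ℝ)
    (hu : ∀ i, u i = if i ∈ H then (α i / β) * (dH2 / (d i) ^ 2 - 1) else 0) :
    ∀ w : Fin c → ℝ, (∀ i, 0 ≤ w i) → (∑ i, w i = 1) →
      ∑ i, ((u i) ^ 2 / (2 * α i) + u i / β) * (d i) ^ 2 ≤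
        ∑ i, ((w i) ^ 2 / (2 * α i) + w i / β) * (d i) ^ 2 :=
  stmt19_general c d α β hd hα hβ H hH dH2 hdH2 hout u hu
end
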